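/- Let L ⊂ Z^{n+2} be the lattice of a simplicial codimension-two lattice ideal I_L ⊂ K[y,z,x_1,...,x_n] (defined by data a_i, b_i, c_i with a_i ≠ 0), and suppose the variables x_i are ordered so that the slopes of the lines D_i = {(s,p) ∈ R^2 : s b_i − p c_i = 0} are increasing. Then any binomial B = M_1 − M_2 ∈ I_L with coprime monomials M_1, M_2 involving both y and z with positive exponents on opposite sides, i.e. B = z^s x_1^{v_1}···x_k^{v_k} − y^p x_{k+1}^{v_{k+1}}···x_n^{v_n} with s,p > 0, satisfies: there exists k such that for the lattice vector (v,s,p) ∈ L one has v_i < 0 for all i < k and v_i ≥ 0 for all i ≥ k. -/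
import Mathlib


/-- for a simplicial codimension-two lattice `L` (defined by data
`a, b, c, h` with `a i ≠ 0`), with the variables ordered so that the slopes of the lines
`D_i = {(s,p) : s bᵢ - p cᵢ = 0}` are increasing, every lattice vector `(v, s, p) ∈ L`
with `s, p > 0` has a sign pattern: there is `k` such that `vᵢ < 0` for `i < k` and
`vᵢ ≥ 0` for `i ≥ k`. -/
theorem stmt_14 (n : ℕ) (a b c : Fin n → ℕ) (ha : ∀ i, a i ≠ 0)
    (hbc : ∀ i, (b i, c i) ≠ (0, 0)) (hb : b ≠ 0) (hc : c ≠ 0)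
    (H : Type) [AddCommGroup H] [Finite H] (h : Fin n → H) (hy hz : H)
    -- the slopes of the lines `D_i` are in increasing order
    (hord : ∀ i j : Fin n, i ≤ j → (b i : ℤ) * (c j : ℤ) ≤ (b j : ℤ) * (c i : ℤ))
    -- a lattice vector `(v, s, p) ∈ L` with `s, p > 0`
    (v : Fin n → ℤ) (s p : ℤ) (hs : 0 < s) (hp : 0 < p)
    (hrel : ∀ i, v i * (a i : ℤ) = s * (b i : ℤ) - p * (c i : ℤ))
    (htor : (∑ i, v i • h i) = s • hz - p • hy) :
    ∃ k : ℕ, ∀ i : Fin n, ((i : ℕ) < k → v i < 0) ∧ (k ≤ (i : ℕ) → 0 ≤ v i) := by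
  classical
  have hmono : ∀ i j : Fin n, i ≤ j → 0 ≤ v i → 0 ≤ v j := by
    intro i j hij hvi
    have hai : (0:ℤ) < a i := by exact_mod_cast Nat.pos_of_ne_zero (ha i)
    have haj : (0:ℤ) < a j := by exact_mod_cast Nat.pos_of_ne_zero (ha j)
    have h1 : (0:ℤ) ≤ s * b i - p * c i := by
      have := mul_nonneg hvi hai.le
      rw [hrel i] at this; exact this
    have hordij := hord i j hij
    have hbi : (0:ℤ) ≤ b i := Int.natCast_nonneg _
    have hbj : (0:ℤ) ≤ b j := Int.natCast_nonneg _
    have hcj : (0:ℤ) ≤ c j := Int.natCast_nonneg _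
    have h2 : (0:ℤ) ≤ s * b j - p * c j := by
      rcases eq_or_lt_of_le (Int.natCast_nonneg (c i) : (0:ℤ) ≤ c i) with hci | hci
      · -- c i = 0, so b i > 0, hence c j = 0
        have hbipos : (0:ℤ) < b i := by
          rcases Nat.eq_zero_or_pos (b i) with hb0 | hb0
          · exfalso; apply hbc i
            have : c i = 0 := by exact_mod_cast hci.symm
            rw [hb0, this]
          · exact_mod_cast hb0
        have hcj0 : (c j : ℤ) = 0 := by nlinarith
        nlinarith
      · nlinarith
    by_contra hneg
    push_neg at hneg
    have : v j * a j < 0 := mul_neg_of_neg_of_pos hneg haj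
    rw [hrel j] at this
    linarith
  by_cases hne : ∃ m : ℕ, ∃ hm : m < n, 0 ≤ v ⟨m, hm⟩
  · refine ⟨Nat.find hne, fun i => ⟨fun hik => ?_, fun hki => ?_⟩⟩
    · by_contra hge
      push_neg at hge
      exact absurd hik (not_lt.mpr (Nat.find_le ⟨i.2, hge⟩))
    · obtain ⟨hk, hvk⟩ := Nat.find_spec hne
      exact hmono ⟨Nat.find hne, hk⟩ i hki hvk
  · push_neg at hne
    refine ⟨n, fun i => ⟨fun _ => ?_, fun hni => absurd i.2 (not_lt.mpr hni)⟩⟩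
    simpa using hne i.1 i.2
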